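/- arXiv:2307.14090 — 2 statements merged into one kernel-verified Lean document; each statement's English description precedes it below -/
import Mathlib

section
/- Let A : ℝ → (H →L[ℝ] H) be such that every solution of ẏ = A(t)y satisfies ‖y(t)‖ ≤ D e^{-λ(t-s)}‖y(s)‖ for all t ≥ s ≥ 0, with D ≥ 1, λ > 0. Let E : ℝ → (H →L[ℝ] H) be bounded with ‖E‖_∞ < λ/(√2 D). Then every solution y of ẏ = (A(t)+E(t))y satisfies ∫_{s₀}^∞ ‖y(t)‖² dt ≤ (λ D²/(λ² − 2D²‖E‖_∞²)) ‖y(s₀)‖² for all s₀ ≥ 0. -/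
/-!
Put `u t = ‖y t‖`. The Duhamel formula and the bounds on `Φ` and `E` give
`u t ≤ D u(s₀) e^{-λ(t-s₀)} + D M ∫_{s₀}^t e^{-λ(t-s)} u s ds`.
Squaring with `(p + q)² ≤ 2p² + 2q²` and applying Cauchy–Schwarz to the weight
`e^{-λ(t-s)}`, whose mass is at most `1/λ`, gives
`u t² ≤ 2D² u(s₀)² e^{-2λ(t-s₀)} + (2D²M²/λ) ∫_{s₀}^t e^{-λ(t-s)} u s² ds`.
Integrating over `t ≥ s₀` and exchanging the order of integration, the convolution with the
kernel `e^{-λr}` costs a factor `1/λ`, so `I = ∫ u²` satisfies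
`I ≤ D² u(s₀)²/λ + (2D²M²/λ²) I`, which is the claim since `2D²M² < λ²`.
-/

open MeasureTheory Real Set
open scoped ENNReal

theorem sq_integral_mul_le_integral_mul_integral_mul_sq {α : Type*} [MeasurableSpace α]
    {μ : Measure α} {w g : α → ℝ} (hw : 0 ≤ᵐ[μ] w) (hw_int : Integrable w μ)
    (hwg : Integrable (fun x => w x * g x) μ) (hwg2 : Integrable (fun x => w x * g x ^ 2) μ) :
    (∫ x, w x * g x ∂μ) ^ 2 ≤ (∫ x, w x ∂μ) * ∫ x, w x * g x ^ 2 ∂μ := by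
  have hquad : ∀ r : ℝ, 0 ≤ (∫ x, w x ∂μ) * (r * r) + (2 * ∫ x, w x * g x ∂μ) * r
      + ∫ x, w x * g x ^ 2 ∂μ := fun r => by
    have hexpand : ∫ x, w x * (r + g x) ^ 2 ∂μ = (∫ x, w x ∂μ) * (r * r)
        + (2 * ∫ x, w x * g x ∂μ) * r + ∫ x, w x * g x ^ 2 ∂μ := by
      simp_rw [fun x => show w x * (r + g x) ^ 2
        = r * r * w x + (2 * r * (w x * g x) + w x * g x ^ 2) by ring]
      rw [integral_add (hw_int.const_mul _) ((hwg.const_mul _).fun_add hwg2),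
        integral_add (hwg.const_mul _) hwg2, integral_const_mul, integral_const_mul]
      ring
    exact hexpand ▸ integral_nonneg_of_ae (hw.mono fun x hx => mul_nonneg hx (sq_nonneg _))
  have hdiscr := discrim_le_zero hquad
  rw [discrim] at hdiscr
  nlinarith

theorem MeasureTheory.Integrable.of_sq_of_nonneg {α : Type*} [MeasurableSpace α]
    {μ : Measure α} [IsFiniteMeasure μ] {u : α → ℝ} (hu0 : ∀ x, 0 ≤ u x)
    (hu2 : Integrable (fun x => u x ^ 2) μ) : Integrable u μ := by
  have hmeas : AEStronglyMeasurable u μ := by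
    simpa [sqrt_sq (hu0 _)] using continuous_sqrt.comp_aestronglyMeasurable hu2.1
  exact ((memLp_two_iff_integrable_sq hmeas).2 hu2).integrable one_le_two

theorem MeasureTheory.IntegrableOn.intervalIntegrable_of_sq {u : ℝ → ℝ} {s₀ t : ℝ}
    (hu0 : ∀ x, 0 ≤ u x) (hu2 : IntegrableOn (fun x => u x ^ 2) (Ici s₀)) (hst : s₀ ≤ t) :
    IntervalIntegrable u volume s₀ t :=
  (intervalIntegrable_iff_integrableOn_Ioc_of_le hst).2 <| Integrable.of_sq_of_nonneg hu0 <|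
    hu2.mono_set (Ioc_subset_Ioi_self.trans Ioi_subset_Ici_self)

theorem lintegral_lintegral_mul_sub {G : Type*} [MeasurableSpace G] [AddGroup G]
    [MeasurableAdd₂ G] [MeasurableNeg G] {μ : Measure G} [SFinite μ] [μ.IsAddRightInvariant]
    {k g : G → ℝ≥0∞} (hk : Measurable k) (hg : AEMeasurable g μ) :
    ∫⁻ t, ∫⁻ s, k (t - s) * g s ∂μ ∂μ = (∫⁻ r, k r ∂μ) * ∫⁻ s, g s ∂μ := by
  have hg_mk : ∀ t, ∫⁻ s, k (t - s) * g s ∂μ = ∫⁻ s, k (t - s) * hg.mk g s ∂μ := fun t =>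
    lintegral_congr_ae (hg.ae_eq_mk.mono fun s hs => by simp only [hs])
  simp_rw [hg_mk, lintegral_congr_ae hg.ae_eq_mk]
  rw [lintegral_lintegral_swap ((hk.comp measurable_sub).mul
    (hg.measurable_mk.comp measurable_snd)).aemeasurable, ← lintegral_const_mul _ hg.measurable_mk]
  refine lintegral_congr fun s => ?_
  rw [lintegral_mul_const (f := fun x => k (x - s)) _ (hk.comp (measurable_sub_const s)),
    lintegral_sub_right_eq_self k s, mul_comm]

theorem integral_Ioi_exp_neg_mul_sub {c : ℝ} (hc : 0 < c) (a : ℝ) :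
    ∫ t in Ioi a, exp (-c * (t - a)) = 1 / c := by
  simp_rw [mul_sub, sub_eq_add_neg, exp_add, integral_mul_const]
  rw [integral_exp_mul_Ioi (neg_neg_of_pos hc), neg_div_neg_eq, div_mul_eq_mul_div, ← exp_add,
    add_neg_cancel, exp_zero]

theorem lintegral_Ici_exp_neg_mul_sub {c : ℝ} (hc : 0 < c) (a : ℝ) :
    ∫⁻ t in Ici a, ENNReal.ofReal (exp (-c * (t - a))) = ENNReal.ofReal (1 / c) := by
  have hint : IntegrableOn (fun t => exp (-c * (t - a))) (Ioi a) := by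
    simp_rw [mul_sub, sub_eq_add_neg, exp_add]
    exact (integrableOn_exp_mul_Ioi (neg_neg_of_pos hc) a).mul_const _
  rw [setLIntegral_congr Ioi_ae_eq_Ici.symm, ← integral_Ioi_exp_neg_mul_sub hc a,
    ofReal_integral_eq_lintegral_ofReal hint (Filter.Eventually.of_forall fun _ => (exp_pos _).le)]

theorem intervalIntegral_exp_neg_mul_sub_le {c s₀ t : ℝ} (hc : 0 < c) (hst : s₀ ≤ t) :
    ∫ s in s₀..t, exp (-c * (t - s)) ≤ 1 / c := by
  rw [intervalIntegral.integral_comp_sub_left (fun r => exp (-c * r)), sub_self,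
    intervalIntegral.integral_of_le (sub_nonneg.2 hst), ← integral_Ioi_exp_neg_mul_sub hc 0]
  simp_rw [sub_zero]
  exact setIntegral_mono_set (integrableOn_exp_mul_Ioi (neg_neg_of_pos hc) 0)
    (Filter.Eventually.of_forall fun _ => (exp_pos _).le) Ioc_subset_Ioi_self.eventuallyLE

theorem sq_intervalIntegral_exp_mul_le {u : ℝ → ℝ} {lam s₀ t : ℝ} (hlam : 0 < lam)
    (hst : s₀ ≤ t) (hu : IntervalIntegrable u volume s₀ t)
    (hu2 : IntervalIntegrable (fun s => u s ^ 2) volume s₀ t) :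
    (∫ s in s₀..t, exp (-lam * (t - s)) * u s) ^ 2
      ≤ (∫ s in s₀..t, exp (-lam * (t - s)) * u s ^ 2) / lam := by
  have hw : Continuous fun s => exp (-lam * (t - s)) := by fun_prop
  set J := ∫ s in s₀..t, exp (-lam * (t - s)) * u s ^ 2
  have hJ : 0 ≤ J := intervalIntegral.integral_nonneg hst fun s _ => by positivity
  calc (∫ s in s₀..t, exp (-lam * (t - s)) * u s) ^ 2
      ≤ (∫ s in s₀..t, exp (-lam * (t - s))) * J := by
        simp only [J, intervalIntegral.integral_of_le hst]
        exact sq_integral_mul_le_integral_mul_integral_mul_sq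
          (Filter.Eventually.of_forall fun _ => (exp_pos _).le) hw.integrableOn_Ioc
          (hu.continuousOn_mul hw.continuousOn).1 (hu2.continuousOn_mul hw.continuousOn).1
    _ ≤ 1 / lam * J := mul_le_mul_of_nonneg_right (intervalIntegral_exp_neg_mul_sub_le hlam hst) hJ
    _ = J / lam := by ring

theorem sq_le_of_le_exp_add_intervalIntegral {u : ℝ → ℝ} {a b lam s₀ t : ℝ}
    (hlam : 0 < lam) (hst : s₀ ≤ t) (hu : IntervalIntegrable u volume s₀ t)
    (hu2 : IntervalIntegrable (fun s => u s ^ 2) volume s₀ t) (hut : 0 ≤ u t)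
    (hbound : u t ≤ a * exp (-lam * (t - s₀)) + b * ∫ s in s₀..t, exp (-lam * (t - s)) * u s) :
    u t ^ 2 ≤ 2 * a ^ 2 * exp (-(2 * lam) * (t - s₀))
      + 2 * b ^ 2 / lam * ∫ s in s₀..t, exp (-lam * (t - s)) * u s ^ 2 := by
  set X := ∫ s in s₀..t, exp (-lam * (t - s)) * u s
  set A := a * exp (-lam * (t - s₀))
  have hA : A ^ 2 = a ^ 2 * exp (-(2 * lam) * (t - s₀)) := by
    rw [mul_pow, ← exp_nat_mul]; ring_nf
  have hX := sq_intervalIntegral_exp_mul_le hlam hst hu hu2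
  calc u t ^ 2 ≤ (A + b * X) ^ 2 := pow_le_pow_left₀ hut hbound 2
    _ ≤ 2 * A ^ 2 + 2 * b ^ 2 * X ^ 2 := by nlinarith [sq_nonneg (A - b * X)]
    _ ≤ 2 * A ^ 2 + 2 * b ^ 2 * ((∫ s in s₀..t, exp (-lam * (t - s)) * u s ^ 2) / lam) := by
      gcongr
    _ = _ := by rw [hA]; ring

theorem lintegral_Ici_intervalIntegral_exp_mul_le {f : ℝ → ℝ} {lam s₀ : ℝ} (hlam : 0 < lam)
    (hf0 : ∀ t, 0 ≤ f t) (hf : IntegrableOn f (Ici s₀)) :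
    ∫⁻ t in Ici s₀, ENNReal.ofReal (∫ s in s₀..t, exp (-lam * (t - s)) * f s)
      ≤ ENNReal.ofReal ((∫ t in Ici s₀, f t) / lam) := by
  set k := (Ici 0).indicator fun r => ENNReal.ofReal (exp (-lam * r))
  set g := (Ioi s₀).indicator fun s => ENNReal.ofReal (f s)
  have hk : Measurable k :=
    (by fun_prop : Measurable fun r => ENNReal.ofReal (exp (-lam * r))).indicator measurableSet_Ici
  have hg : AEMeasurable g := (aemeasurable_indicator_iff measurableSet_Ioi).2
    (hf.mono_set Ioi_subset_Ici_self).aemeasurable.ennreal_ofReal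
  have hinner : ∀ t ∈ Ici s₀, ENNReal.ofReal (∫ s in s₀..t, exp (-lam * (t - s)) * f s)
      = ∫⁻ s, k (t - s) * g s := by
    intro t (ht : s₀ ≤ t)
    have hint : IntegrableOn (fun s => exp (-lam * (t - s)) * f s) (Ioc s₀ t) :=
      ((hf.mono_set (uIcc_of_le ht ▸ Icc_subset_Ici_self)).intervalIntegrable.continuousOn_mul
        (by fun_prop : Continuous fun s => exp (-lam * (t - s))).continuousOn).1
    rw [intervalIntegral.integral_of_le ht, ofReal_integral_eq_lintegral_ofReal hint
      (Filter.Eventually.of_forall fun s => mul_nonneg (exp_pos _).le (hf0 s)),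
      ← lintegral_indicator measurableSet_Ioc]
    congr 1; funext s
    simp only [k, g, indicator, mem_Ioc, mem_Ici, mem_Ioi, sub_nonneg]
    split_ifs <;> simp_all [ENNReal.ofReal_mul' (hf0 s)]
  calc ∫⁻ t in Ici s₀, ENNReal.ofReal (∫ s in s₀..t, exp (-lam * (t - s)) * f s)
      = ∫⁻ t in Ici s₀, ∫⁻ s, k (t - s) * g s :=
        setLIntegral_congr_fun measurableSet_Ici hinner
    _ ≤ ∫⁻ t, ∫⁻ s, k (t - s) * g s := setLIntegral_le_lintegral _ _
    _ = (∫⁻ r, k r) * ∫⁻ s, g s := lintegral_lintegral_mul_sub hk hg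
    _ = ENNReal.ofReal (1 / lam) * ENNReal.ofReal (∫ t in Ici s₀, f t) := by
      have hk_int := lintegral_Ici_exp_neg_mul_sub hlam 0
      simp only [sub_zero] at hk_int
      rw [lintegral_indicator measurableSet_Ici, lintegral_indicator measurableSet_Ioi,
        setLIntegral_congr Ioi_ae_eq_Ici, ofReal_integral_eq_lintegral_ofReal hf
          (Filter.Eventually.of_forall hf0), hk_int]
    _ = ENNReal.ofReal ((∫ t in Ici s₀, f t) / lam) := by
      rw [← ENNReal.ofReal_mul (by positivity), one_div_mul_eq_div]

theorem integral_Ici_sq_le_of_le_exp_add_intervalIntegral {u : ℝ → ℝ} {a b lam s₀ : ℝ}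
    (hlam : 0 < lam) (hb : 2 * b ^ 2 < lam ^ 2) (hu0 : ∀ t, 0 ≤ u t)
    (hu2 : IntegrableOn (fun t => u t ^ 2) (Ici s₀))
    (hbound : ∀ t, s₀ ≤ t →
      u t ≤ a * exp (-lam * (t - s₀)) + b * ∫ s in s₀..t, exp (-lam * (t - s)) * u s) :
    ∫ t in Ici s₀, u t ^ 2 ≤ lam * a ^ 2 / (lam ^ 2 - 2 * b ^ 2) := by
  set I := ∫ t in Ici s₀, u t ^ 2
  have hI0 : 0 ≤ I := setIntegral_nonneg measurableSet_Ici fun t _ => sq_nonneg (u t)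
  have hpt : ∀ t ∈ Ici s₀, ENNReal.ofReal (u t ^ 2)
      ≤ ENNReal.ofReal (2 * a ^ 2) * ENNReal.ofReal (exp (-(2 * lam) * (t - s₀)))
        + ENNReal.ofReal (2 * b ^ 2 / lam)
          * ENNReal.ofReal (∫ s in s₀..t, exp (-lam * (t - s)) * u s ^ 2) := by
    intro t (ht : s₀ ≤ t)
    have hu2_loc : IntervalIntegrable (fun s => u s ^ 2) volume s₀ t :=
      (hu2.mono_set (uIcc_of_le ht ▸ Icc_subset_Ici_self)).intervalIntegrable
    rw [← ENNReal.ofReal_mul (by positivity), ← ENNReal.ofReal_mul (by positivity)]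
    exact (ENNReal.ofReal_le_ofReal (sq_le_of_le_exp_add_intervalIntegral hlam ht
      (hu2.intervalIntegrable_of_sq hu0 ht) hu2_loc (hu0 t) (hbound t ht))).trans
      ENNReal.ofReal_add_le
  have hI : ENNReal.ofReal I ≤ ENNReal.ofReal (a ^ 2 / lam + 2 * b ^ 2 / lam * (I / lam)) := by
    calc ENNReal.ofReal I = ∫⁻ t in Ici s₀, ENNReal.ofReal (u t ^ 2) :=
          ofReal_integral_eq_lintegral_ofReal hu2 (Filter.Eventually.of_forall fun _ => sq_nonneg _)
      _ ≤ ENNReal.ofReal (2 * a ^ 2)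
            * (∫⁻ t in Ici s₀, ENNReal.ofReal (exp (-(2 * lam) * (t - s₀))))
          + ENNReal.ofReal (2 * b ^ 2 / lam)
            * ∫⁻ t in Ici s₀, ENNReal.ofReal (∫ s in s₀..t, exp (-lam * (t - s)) * u s ^ 2) := by
        rw [← lintegral_const_mul' _ _ ENNReal.ofReal_ne_top,
          ← lintegral_const_mul' _ _ ENNReal.ofReal_ne_top, ← lintegral_add_left (by fun_prop)]
        exact setLIntegral_mono' measurableSet_Ici hpt
      _ ≤ ENNReal.ofReal (2 * a ^ 2) * ENNReal.ofReal (1 / (2 * lam))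
          + ENNReal.ofReal (2 * b ^ 2 / lam) * ENNReal.ofReal (I / lam) := by
        rw [lintegral_Ici_exp_neg_mul_sub (by positivity)]
        gcongr
        exact lintegral_Ici_intervalIntegral_exp_mul_le hlam (fun t => sq_nonneg (u t)) hu2
      _ = ENNReal.ofReal (a ^ 2 / lam + 2 * b ^ 2 / lam * (I / lam)) := by
        rw [← ENNReal.ofReal_mul (by positivity), ← ENNReal.ofReal_mul (by positivity),
          ← ENNReal.ofReal_add (by positivity) (by positivity)]
        congr 1
        field_simp
  have hI' := (ENNReal.ofReal_le_ofReal_iff (by positivity)).1 hI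
  rw [le_div_iff₀ (by linarith)]
  field_simp at hI'
  nlinarith

theorem norm_le_of_duhamel {H : Type*} [NormedAddCommGroup H] [NormedSpace ℝ H]
    {Φ : ℝ → ℝ → H →L[ℝ] H} {E : ℝ → H →L[ℝ] H} {y : ℝ → H} {D lam M s₀ t : ℝ}
    (hst : s₀ ≤ t) (hΦ : ∀ s, s₀ ≤ s → s ≤ t → ‖Φ t s‖ ≤ D * exp (-lam * (t - s)))
    (hE : ∀ s, ‖E s‖ ≤ M) (hy : IntervalIntegrable (fun s => ‖y s‖) volume s₀ t)
    (hmild : y t = Φ t s₀ (y s₀) + ∫ s in s₀..t, Φ t s (E s (y s))) :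
    ‖y t‖ ≤ D * ‖y s₀‖ * exp (-lam * (t - s₀))
      + D * M * ∫ s in s₀..t, exp (-lam * (t - s)) * ‖y s‖ := by
  have hpt : ∀ s, s₀ ≤ s → s ≤ t →
      ‖Φ t s (E s (y s))‖ ≤ D * M * (exp (-lam * (t - s)) * ‖y s‖) := fun s hs hst' =>
    calc ‖Φ t s (E s (y s))‖ ≤ ‖Φ t s‖ * (‖E s‖ * ‖y s‖) :=
          (Φ t s).le_opNorm_of_le ((E s).le_opNorm _)
      _ ≤ D * exp (-lam * (t - s)) * (M * ‖y s‖) := by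
          gcongr
          · exact (norm_nonneg _).trans (hΦ s hs hst')
          · exact hΦ s hs hst'
          · exact hE s
      _ = D * M * (exp (-lam * (t - s)) * ‖y s‖) := by ring
  have hint : ‖∫ s in s₀..t, Φ t s (E s (y s))‖
      ≤ D * M * ∫ s in s₀..t, exp (-lam * (t - s)) * ‖y s‖ := by
    rw [← intervalIntegral.integral_const_mul]
    refine intervalIntegral.norm_integral_le_of_norm_le hst
      (Filter.Eventually.of_forall fun s hs => hpt s hs.1.le hs.2) ?_
    exact (hy.continuousOn_mul
      (by fun_prop : Continuous fun s => exp (-lam * (t - s))).continuousOn).const_mul _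
  calc ‖y t‖ ≤ ‖Φ t s₀ (y s₀)‖ + ‖∫ s in s₀..t, Φ t s (E s (y s))‖ := hmild ▸ norm_add_le _ _
    _ ≤ D * exp (-lam * (t - s₀)) * ‖y s₀‖
        + D * M * ∫ s in s₀..t, exp (-lam * (t - s)) * ‖y s‖ :=
      add_le_add ((Φ t s₀).le_of_opNorm_le (hΦ s₀ le_rfl hst) _) hint
    _ = _ := by ring

theorem stmt_0_general
    {H : Type*} [NormedAddCommGroup H] [InnerProductSpace ℝ H]
    (Φ : ℝ → ℝ → (H →L[ℝ] H)) (E : ℝ → (H →L[ℝ] H))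
    (D lam M : ℝ) (hD : 1 ≤ D) (hlam : 0 < lam)
    (hΦ : ∀ t s : ℝ, 0 ≤ s → s ≤ t → ‖Φ t s‖ ≤ D * exp (-lam * (t - s)))
    (hE : ∀ t : ℝ, ‖E t‖ ≤ M)
    (hM : M < lam / (Real.sqrt 2 * D))
    (y : ℝ → H) (s₀ : ℝ) (hs₀ : 0 ≤ s₀)
    (hmild : ∀ t : ℝ, s₀ ≤ t →
      y t = Φ t s₀ (y s₀) + ∫ s in s₀..t, Φ t s (E s (y s))) :
    ∫ t in Set.Ici s₀, ‖y t‖ ^ 2 ≤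
      (lam * D ^ 2 / (lam ^ 2 - 2 * D ^ 2 * M ^ 2)) * ‖y s₀‖ ^ 2 := by
  have hM0 : 0 ≤ M := (norm_nonneg _).trans (hE 0)
  have hsmall : 2 * (D * M) ^ 2 < lam ^ 2 := by
    have h := (lt_div_iff₀ (by positivity)).1 hM
    have hsqrt : sqrt 2 ^ 2 = 2 := sq_sqrt zero_le_two
    nlinarith [mul_nonneg hM0 (by positivity : 0 ≤ sqrt 2 * D)]
  have hrhs : lam * D ^ 2 / (lam ^ 2 - 2 * D ^ 2 * M ^ 2) * ‖y s₀‖ ^ 2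
      = lam * (D * ‖y s₀‖) ^ 2 / (lam ^ 2 - 2 * (D * M) ^ 2) := by ring
  by_cases hy2 : IntegrableOn (fun t => ‖y t‖ ^ 2) (Ici s₀)
  · rw [hrhs]
    exact integral_Ici_sq_le_of_le_exp_add_intervalIntegral hlam hsmall (fun _ => norm_nonneg _)
      hy2 fun t ht => norm_le_of_duhamel ht (fun s hs hst => hΦ t s (hs₀.trans hs) hst) hE
        (hy2.intervalIntegrable_of_sq (fun _ => norm_nonneg _) ht) (hmild t ht)
  · -- without integrability the left-hand side is the junk value `0`
    rw [integral_undef hy2, hrhs]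
    exact div_nonneg (by positivity) (by linarith)

/-- Perturbed exponential stability implies a uniform L² bound on trajectories,
via the Duhamel/mild formulation. -/
theorem stmt_0
    {H : Type*} [NormedAddCommGroup H] [InnerProductSpace ℝ H] [CompleteSpace H]
    (Φ : ℝ → ℝ → (H →L[ℝ] H)) (E : ℝ → (H →L[ℝ] H))
    (D lam M : ℝ) (hD : 1 ≤ D) (hlam : 0 < lam)
    (hΦ : ∀ t s : ℝ, 0 ≤ s → s ≤ t → ‖Φ t s‖ ≤ D * exp (-lam * (t - s)))
    (hE : ∀ t : ℝ, ‖E t‖ ≤ M)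
    (hM : M < lam / (Real.sqrt 2 * D))
    (y : ℝ → H) (s₀ : ℝ) (hs₀ : 0 ≤ s₀)
    (hmild : ∀ t : ℝ, s₀ ≤ t →
      y t = Φ t s₀ (y s₀) + ∫ s in s₀..t, Φ t s (E s (y s))) :
    ∫ t in Set.Ici s₀, ‖y t‖ ^ 2 ≤
      (lam * D ^ 2 / (lam ^ 2 - 2 * D ^ 2 * M ^ 2)) * ‖y s₀‖ ^ 2 :=
  stmt_0_general Φ E D lam M hD hlam hΦ hE hM y s₀ hs₀ hmild
end

section
/- Consider A_σ = [[1,1],[0,σ]], B = [1,0]ᵀ, C = [1,0], and a feedback K = [κ₁,κ₂]. Let Ξ_σ = I + ξ(A_σ + BK) for ξ > 0, and suppose the initial state y₀ = (y₀₁, 0)ᵀ has vanishing second component. Then for any two parameters σ, ς and every j ∈ ℕ, K(Ξ_ς^j − Ξ_σ^j) y₀ = 0 and C(Ξ_ς^j − Ξ_σ^j) y₀ = 0; i.e., the input and output data of the discretized closed-loop systems coincide for all parameters. -/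
/-! The closed-loop matrix `Ξ_σ` is upper triangular, so `y₀ = (y₀₁, 0)ᵀ` is an eigenvector of
`Ξ_σ` whose eigenvalue `1 + ξ(1 + κ₁)` does not involve `σ`. Hence `Ξ_σ ^ j y₀` does not depend
on `σ`, and every difference `Ξ_ς ^ j y₀ - Ξ_σ ^ j y₀` vanishes. -/

namespace Matrix

theorem pow_mul_of_mul_eq_smul {n m R : Type*} [Fintype n] [DecidableEq n] [CommSemiring R]
    {M : Matrix n n R} {v : Matrix n m R} {c : R} (h : M * v = c • v) (k : ℕ) :
    M ^ k * v = c ^ k • v := by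
  induction k with
  | zero => simp
  | succ k ih => rw [pow_succ, Matrix.mul_assoc, h, Matrix.mul_smul, ih, smul_smul, pow_succ']

theorem mul_col_zero_eq_smul_of_upperTriangular {R : Type*} [CommSemiring R]
    {M : Matrix (Fin 2) (Fin 2) R} (hM : M 1 0 = 0) (a : R) :
    M * !![a; 0] = M 0 0 • !![a; 0] := by
  ext i k
  fin_cases i <;> fin_cases k <;> simp [Matrix.mul_apply, hM, mul_comm]

end Matrix

theorem stmt_11_general (ξ κ₁ κ₂ y₀₁ : ℝ) (σ ς : ℝ) :
    let A : ℝ → Matrix (Fin 2) (Fin 2) ℝ := fun a => !![1, 1; 0, a]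
    let B : Matrix (Fin 2) (Fin 1) ℝ := !![1; 0]
    let K : Matrix (Fin 1) (Fin 2) ℝ := !![κ₁, κ₂]
    let Cm : Matrix (Fin 1) (Fin 2) ℝ := !![1, 0]
    let Ξ : ℝ → Matrix (Fin 2) (Fin 2) ℝ := fun a => 1 + ξ • (A a + B * K)
    let y₀ : Matrix (Fin 2) (Fin 1) ℝ := !![y₀₁; 0]
    ∀ j : ℕ, K * (Ξ ς ^ j - Ξ σ ^ j) * y₀ = 0 ∧ Cm * (Ξ ς ^ j - Ξ σ ^ j) * y₀ = 0 := by
  intro A B K Cm Ξ y₀ j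
  have eigen : ∀ a, Ξ a * y₀ = (1 + ξ * (1 + κ₁)) • y₀ := fun a => by
    rw [Matrix.mul_col_zero_eq_smul_of_upperTriangular (by simp [Ξ, A, B, K])]
    congr 1
    simp [Ξ, A, B, K]
  have diff : (Ξ ς ^ j - Ξ σ ^ j) * y₀ = 0 := by
    rw [Matrix.sub_mul, Matrix.pow_mul_of_mul_eq_smul (eigen ς),
      Matrix.pow_mul_of_mul_eq_smul (eigen σ), sub_self]
  constructor <;> rw [Matrix.mul_assoc, diff, Matrix.mul_zero]

/-- For A_σ = [[1,1],[0,σ]], B = [1,0]ᵀ, C = [1,0], K = [κ₁,κ₂],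
Ξ_σ = I + ξ(A_σ + BK), and initial state y₀ = (y₀₁, 0)ᵀ, the input and output data of the
discretized closed-loop systems coincide for all parameters:
K(Ξ_ς^j − Ξ_σ^j)y₀ = 0 and C(Ξ_ς^j − Ξ_σ^j)y₀ = 0 for all j. -/
theorem stmt_11 (ξ κ₁ κ₂ y₀₁ : ℝ) (hξ : 0 < ξ) (σ ς : ℝ) :
    let A : ℝ → Matrix (Fin 2) (Fin 2) ℝ := fun a => !![1, 1; 0, a]
    let B : Matrix (Fin 2) (Fin 1) ℝ := !![1; 0]
    let K : Matrix (Fin 1) (Fin 2) ℝ := !![κ₁, κ₂]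
    let Cm : Matrix (Fin 1) (Fin 2) ℝ := !![1, 0]
    let Ξ : ℝ → Matrix (Fin 2) (Fin 2) ℝ := fun a => 1 + ξ • (A a + B * K)
    let y₀ : Matrix (Fin 2) (Fin 1) ℝ := !![y₀₁; 0]
    ∀ j : ℕ, K * (Ξ ς ^ j - Ξ σ ^ j) * y₀ = 0 ∧ Cm * (Ξ ς ^ j - Ξ σ ^ j) * y₀ = 0 :=
  stmt_11_general ξ κ₁ κ₂ y₀₁ σ ς
end
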